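/- Fix a positive integer i and define f(x, y) = |ψ^(i)(x)| + |ψ^(i)(y)| − |ψ^(i)(xy)| for x, y > 0. For each fixed y > 1, the function x ↦ f(x, y) is strictly decreasing on (0, ∞); for each fixed y ∈ (0, 1), the function x ↦ f(x, y) is strictly increasing on (0, ∞). -/

import Mathlib

noncomputable def digamma : ℝ → ℝ := deriv (fun x => Real.log (Real.Gamma x))

noncomputable def polygamma (i : ℕ) : ℝ → ℝ := iteratedDeriv i digamma

/-!
For `x > 0` and `i ≥ 1` one has `|ψ^(i)(x)| = i! S_{i+1}(x)` with `S_m(x) = ∑ₙ (x + n)^(-m)`: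
differentiate term by term the series `ψ(x) = ψ(1) - ∑ₙ (1 / (x + n) - 1 / (1 + n))`, which
follows from `ψ(x + 1) = ψ(x) + 1 / x` and `log (x - 1) ≤ ψ(x) ≤ log x`, both consequences of
the log-convexity of `Γ`. Hence `d/dx |ψ^(i)(x)| = -|ψ^(i+1)(x)|`, and
`x ∂ₓ f(x, y) = x y |ψ^(i+1)(x y)| - x |ψ^(i+1)(x)|`, so it suffices that `u ↦ u S_m(u)` is
strictly decreasing for `m ≥ 3`, i.e. `S_m(u) < m u S_{m+1}(u)`. This follows from
`S_m(u) = u^(-m) + S_m(u + 1)`, `u^(-m) ≤ u S_{m+1}(u)` and the bounds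
`(m - 1) S_m(u + 1) ≤ u^(1-m) ≤ m u S_{m+1}(u)`, obtained by telescoping the tangent-line
inequalities of the convex function `t ↦ t^(1-m)`, since `1 + m / (m - 1) < m` for `m ≥ 3`.
-/

open Filter Set Topology
open scoped Nat

lemma hasDerivAt_inv_pow (k : ℕ) {t : ℝ} (ht : t ≠ 0) :
    HasDerivAt (fun t : ℝ => (t ^ k)⁻¹) (-k * (t ^ (k + 1))⁻¹) t := by
  have h := hasDerivAt_zpow (-(k : ℤ)) t (Or.inl ht)
  simp only [zpow_neg, zpow_natCast] at h
  refine h.congr_deriv ?_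
  rw [show -(k : ℤ) - 1 = -((k + 1 : ℕ) : ℤ) by push_cast; ring, zpow_neg, zpow_natCast]
  push_cast
  ring

lemma convexOn_inv_pow (k : ℕ) : ConvexOn ℝ (Ioi 0) fun t : ℝ => (t ^ k)⁻¹ := by
  simpa only [zpow_neg, zpow_natCast] using convexOn_zpow (𝕜 := ℝ) (-(k : ℤ))

lemma inv_pow_sub_inv_pow_add_one_mem_Icc {a : ℝ} (ha : 0 < a) (k : ℕ) :
    (a ^ k)⁻¹ - ((a + 1) ^ k)⁻¹ ∈ Icc (k * ((a + 1) ^ (k + 1))⁻¹) (k * (a ^ (k + 1))⁻¹) := by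
  have ha' : a ∈ Ioi (0 : ℝ) := ha
  have ha1 : a + 1 ∈ Ioi (0 : ℝ) := by simp only [mem_Ioi]; linarith
  have hslope : slope (fun t : ℝ => (t ^ k)⁻¹) a (a + 1) = ((a + 1) ^ k)⁻¹ - (a ^ k)⁻¹ := by
    simp [slope_def_field]
  have hlo := (convexOn_inv_pow k).le_slope_of_hasDerivAt ha' ha1 (by linarith)
    (hasDerivAt_inv_pow k ha.ne')
  have hhi := (convexOn_inv_pow k).slope_le_of_hasDerivAt ha' ha1 (by linarith)
    (hasDerivAt_inv_pow k (ne_of_gt ha1))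
  rw [hslope] at hlo hhi
  constructor <;> linarith

lemma hasSum_sub_succ_of_antitone {g : ℕ → ℝ} (hg : Antitone g)
    (hlim : Tendsto g atTop (𝓝 0)) : HasSum (fun n => g n - g (n + 1)) (g 0) := by
  rw [hasSum_iff_tendsto_nat_of_nonneg (fun n => sub_nonneg.2 (hg n.le_succ))]
  simp_rw [Finset.sum_range_sub']
  simpa using tendsto_const_nhds.sub hlim

noncomputable def hurwitzSum (m : ℕ) (x : ℝ) : ℝ := ∑' n : ℕ, ((x + n) ^ m)⁻¹

lemma summable_inv_add_nat_pow {m : ℕ} (hm : 2 ≤ m) {x : ℝ} (hx : 0 < x) :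
    Summable fun n : ℕ => ((x + n) ^ m)⁻¹ := by
  have h := (Real.summable_one_div_nat_add_rpow x m).2 (by exact_mod_cast hm)
  refine h.congr fun n => ?_
  rw [abs_of_pos (by positivity), Real.rpow_natCast, one_div, add_comm]

lemma hurwitzSum_pos {m : ℕ} (hm : 2 ≤ m) {x : ℝ} (hx : 0 < x) : 0 < hurwitzSum m x :=
  (summable_inv_add_nat_pow hm hx).tsum_pos (fun n => by positivity) 0
    (by simpa using pow_pos hx m)

lemma hasSum_inv_pow_sub_inv_pow_succ {x : ℝ} (hx : 0 < x) {k : ℕ} (hk : k ≠ 0) :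
    HasSum (fun n : ℕ => ((x + n) ^ k)⁻¹ - ((x + n + 1) ^ k)⁻¹) (x ^ k)⁻¹ := by
  have hanti : Antitone fun n : ℕ => ((x + n) ^ k)⁻¹ := fun a b hab => by
    dsimp only
    gcongr
  have hlim : Tendsto (fun n : ℕ => ((x + n) ^ k)⁻¹) atTop (𝓝 0) :=
    ((tendsto_pow_atTop hk).comp
      (tendsto_atTop_add_const_left _ x tendsto_natCast_atTop_atTop)).inv_tendsto_atTop
  simpa [add_assoc] using hasSum_sub_succ_of_antitone hanti hlim

lemma inv_pow_le_mul_hurwitzSum {x : ℝ} (hx : 0 < x) {k : ℕ} (hk : k ≠ 0) :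
    (x ^ k)⁻¹ ≤ k * hurwitzSum (k + 1) x := by
  refine hasSum_le (fun n => (inv_pow_sub_inv_pow_add_one_mem_Icc (by positivity) k).2)
    (hasSum_inv_pow_sub_inv_pow_succ hx hk) ?_
  exact ((summable_inv_add_nat_pow (by omega) hx).hasSum).mul_left _

lemma mul_hurwitzSum_add_one_le {x : ℝ} (hx : 0 < x) {k : ℕ} (hk : k ≠ 0) :
    k * hurwitzSum (k + 1) (x + 1) ≤ (x ^ k)⁻¹ := by
  refine hasSum_le (fun n => ?_)
    (((summable_inv_add_nat_pow (by omega) (by positivity)).hasSum).mul_left _)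
    (hasSum_inv_pow_sub_inv_pow_succ hx hk)
  simpa only [add_right_comm x 1] using
    (inv_pow_sub_inv_pow_add_one_mem_Icc (a := x + n) (by positivity) k).1

lemma hasDerivAt_tsum_inv_add_nat_pow_sub {m : ℕ} (hm : m ≠ 0) (c : ℕ → ℝ) {x : ℝ}
    (hx : 0 < x) (hsum : Summable fun n : ℕ => ((x + n) ^ m)⁻¹ - c n) :
    HasDerivAt (fun t : ℝ => ∑' n : ℕ, (((t + n) ^ m)⁻¹ - c n))
      (-(m : ℝ) * hurwitzSum (m + 1) x) x := by
  have hx2 : x ∈ Ioi (x / 2) := half_lt_self hx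
  have hderiv : ∀ (n : ℕ) (t : ℝ), t ∈ Ioi (x / 2) → HasDerivAt
      (fun t : ℝ => ((t + n) ^ m)⁻¹ - c n) (-(m : ℝ) * ((t + n) ^ (m + 1))⁻¹) t := fun n t ht => by
    have htn : 0 < t + n := by have : 0 < t := (half_pos hx).trans ht; positivity
    exact ((hasDerivAt_inv_pow m htn.ne').comp_add_const t n).sub_const (c n)
  have hbound : ∀ (n : ℕ) (t : ℝ), t ∈ Ioi (x / 2) →
      ‖-(m : ℝ) * ((t + n) ^ (m + 1))⁻¹‖ ≤ m * ((x / 2 + n) ^ (m + 1))⁻¹ := fun n t ht => by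
    have ht' : x / 2 < t := ht
    have ht0 : 0 < t := (half_pos hx).trans ht
    rw [norm_mul, norm_neg, Real.norm_natCast, norm_inv, norm_pow, Real.norm_of_nonneg
      (by positivity)]
    gcongr
  have h := hasDerivAt_tsum_of_isPreconnected
    ((summable_inv_add_nat_pow (m := m + 1) (by omega) (half_pos hx)).mul_left (m : ℝ))
    isOpen_Ioi (convex_Ioi _).isPreconnected hderiv hbound hx2 hsum hx2
  rwa [tsum_mul_left] at h

lemma hasDerivAt_hurwitzSum {m : ℕ} (hm : 2 ≤ m) {x : ℝ} (hx : 0 < x) :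
    HasDerivAt (hurwitzSum m) (-(m : ℝ) * hurwitzSum (m + 1) x) x := by
  have h := hasDerivAt_tsum_inv_add_nat_pow_sub (m := m) (by omega) 0 hx
    (by simpa using summable_inv_add_nat_pow hm hx)
  simp only [Pi.zero_apply, sub_zero] at h
  exact h

lemma hurwitzSum_eq_inv_pow_add {m : ℕ} (hm : 2 ≤ m) {x : ℝ} (hx : 0 < x) :
    hurwitzSum m x = (x ^ m)⁻¹ + hurwitzSum m (x + 1) := by
  rw [hurwitzSum, (summable_inv_add_nat_pow hm hx).tsum_eq_zero_add, hurwitzSum]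
  push_cast
  simp only [add_zero, add_assoc, add_comm (1 : ℝ)]

lemma inv_pow_lt_hurwitzSum {m : ℕ} (hm : 2 ≤ m) {x : ℝ} (hx : 0 < x) :
    (x ^ m)⁻¹ < hurwitzSum m x := by
  rw [hurwitzSum_eq_inv_pow_add hm hx]
  linarith [hurwitzSum_pos hm (x := x + 1) (by linarith)]

lemma hurwitzSum_lt_mul_hurwitzSum_succ {k : ℕ} (hk : 2 ≤ k) {x : ℝ} (hx : 0 < x) :
    hurwitzSum (k + 1) x < (k + 1) * (x * hurwitzSum (k + 2) x) := by
  set u := x * hurwitzSum (k + 2) x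
  have hx_inv : ∀ n : ℕ, x * (x ^ (n + 1))⁻¹ = (x ^ n)⁻¹ := fun n => by
    rw [pow_succ]; field_simp
  have hfirst : (x ^ (k + 1))⁻¹ ≤ u := by
    rw [← hx_inv]
    exact mul_le_mul_of_nonneg_left (inv_pow_lt_hurwitzSum (by omega) hx).le hx.le
  have htail : k * hurwitzSum (k + 1) (x + 1) ≤ (k + 1) * u := by
    refine (mul_hurwitzSum_add_one_le hx (by omega)).trans ?_
    have h := mul_le_mul_of_nonneg_left (inv_pow_le_mul_hurwitzSum hx (k := k + 1) (by omega))
      hx.le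
    rw [hx_inv] at h
    push_cast at h
    linarith
  have hu : 0 < u := mul_pos hx (hurwitzSum_pos (by omega) hx)
  have hk' : (2 : ℝ) ≤ k := by exact_mod_cast hk
  have htail' : hurwitzSum (k + 1) (x + 1) < k * u := by
    refine lt_of_mul_lt_mul_left ?_ (by positivity : (0 : ℝ) ≤ k)
    nlinarith [mul_nonneg (sub_nonneg.2 hk') hu.le]
  rw [hurwitzSum_eq_inv_pow_add (by omega) hx]
  linarith

lemma strictAntiOn_mul_hurwitzSum {m : ℕ} (hm : 3 ≤ m) :
    StrictAntiOn (fun u => u * hurwitzSum m u) (Ioi 0) := by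
  have hderiv : ∀ u ∈ Ioi (0 : ℝ), HasDerivAt (fun u => u * hurwitzSum m u)
      (1 * hurwitzSum m u + u * (-(m : ℝ) * hurwitzSum (m + 1) u)) u := fun u hu =>
    (hasDerivAt_id u).mul (hasDerivAt_hurwitzSum (m := m) (by omega) hu)
  refine strictAntiOn_of_deriv_neg (convex_Ioi 0)
    (fun u hu => (hderiv u hu).continuousAt.continuousWithinAt) fun u hu => ?_
  rw [interior_Ioi] at hu
  obtain ⟨k, rfl⟩ : ∃ k, m = k + 1 := ⟨m - 1, by omega⟩
  rw [(hderiv u hu).deriv]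
  have := hurwitzSum_lt_mul_hurwitzSum_succ (k := k) (by omega) hu
  push_cast at this ⊢
  linarith

lemma log_Gamma_add_one {x : ℝ} (hx : 0 < x) :
    Real.log (Real.Gamma (x + 1)) = Real.log x + Real.log (Real.Gamma x) := by
  rw [Real.Gamma_add_one hx.ne', Real.log_mul hx.ne' (Real.Gamma_pos_of_pos hx).ne']

lemma hasDerivAt_log_Gamma {x : ℝ} (hx : 0 < x) :
    HasDerivAt (Real.log ∘ Real.Gamma) (digamma x) x :=
  ((Real.differentiableAt_Gamma fun m => by linarith [(m.cast_nonneg : (0 : ℝ) ≤ m)]).log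
    (Real.Gamma_pos_of_pos hx).ne').hasDerivAt

lemma digamma_add_one {x : ℝ} (hx : 0 < x) : digamma (x + 1) = digamma x + x⁻¹ := by
  have hleft := (hasDerivAt_log_Gamma (x := x + 1) (by linarith)).comp_add_const x 1
  have hright := (hasDerivAt_log_Gamma hx).add (Real.hasDerivAt_log hx.ne')
  refine hleft.unique (hright.congr_of_eventuallyEq ?_)
  filter_upwards [Ioi_mem_nhds hx] with t ht
  simp [log_Gamma_add_one ht, add_comm]

lemma digamma_add_nat {x : ℝ} (hx : 0 < x) (N : ℕ) :
    digamma (x + N) = digamma x + ∑ k ∈ Finset.range N, (x + k)⁻¹ := by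
  induction N with
  | zero => simp
  | succ N ih =>
    rw [Nat.cast_succ, ← add_assoc, digamma_add_one (by positivity), ih,
      Finset.sum_range_succ, add_assoc]

lemma digamma_le_log {x : ℝ} (hx : 0 < x) : digamma x ≤ Real.log x := by
  have h := Real.convexOn_log_Gamma.le_slope_of_hasDerivAt hx (by simp; linarith)
    (lt_add_one x) (hasDerivAt_log_Gamma hx)
  simpa [slope_def_field, log_Gamma_add_one hx] using h

lemma log_sub_one_le_digamma {x : ℝ} (hx : 1 < x) : Real.log (x - 1) ≤ digamma x := by
  have hx1 : 0 < x - 1 := by linarith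
  have h := Real.convexOn_log_Gamma.slope_le_of_hasDerivAt hx1 (by simp; linarith)
    (sub_one_lt x) (hasDerivAt_log_Gamma (by linarith))
  have hrec := log_Gamma_add_one hx1
  rw [sub_add_cancel] at hrec
  rw [slope_def_field, Function.comp_apply, Function.comp_apply, hrec] at h
  simpa using h

lemma tendsto_digamma_sub_log : Tendsto (fun t => digamma t - Real.log t) atTop (𝓝 0) := by
  refine tendsto_of_tendsto_of_tendsto_of_le_of_le' (Real.tendsto_log_comp_add_sub_log (-1))
    tendsto_const_nhds ?_ ?_
  · filter_upwards [eventually_gt_atTop 1] with t ht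
    simpa [← sub_eq_add_neg] using log_sub_one_le_digamma ht
  · filter_upwards [eventually_gt_atTop 0] with t ht
    linarith [digamma_le_log ht]

lemma tendsto_digamma_add_sub_digamma (a : ℝ) :
    Tendsto (fun t => digamma (t + a) - digamma t) atTop (𝓝 0) := by
  have h := ((tendsto_digamma_sub_log.comp (tendsto_atTop_add_const_right _ a tendsto_id)).sub
    tendsto_digamma_sub_log).add (Real.tendsto_log_comp_add_sub_log a)
  simp only [sub_zero, add_zero] at h
  exact h.congr fun t => by simp only [Function.comp_apply, id]; ring

lemma summable_inv_add_nat_sub_inv_add_nat {x y : ℝ} (hx : 0 < x) (hy : 0 < y) :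
    Summable fun k : ℕ => (x + k)⁻¹ - (y + k)⁻¹ := by
  refine ((summable_inv_add_nat_pow le_rfl (lt_min hx hy)).mul_left |y - x|).of_norm_bounded
    fun k => ?_
  have hxk : min x y + k ≤ x + k := by gcongr; exact min_le_left x y
  have hyk : min x y + k ≤ y + k := by gcongr; exact min_le_right x y
  have hmin : 0 < min x y + k := by have := lt_min hx hy; positivity
  rw [inv_sub_inv (by positivity) (by positivity), add_sub_add_right_eq_sub, norm_div,
    Real.norm_eq_abs, Real.norm_of_nonneg (by positivity), ← div_eq_mul_inv, sq]
  exact div_le_div_of_nonneg_left (abs_nonneg _) (by positivity)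
    (mul_le_mul hxk hyk hmin.le (by positivity))

lemma hasSum_digamma {x : ℝ} (hx : 0 < x) :
    HasSum (fun k : ℕ => (x + k)⁻¹ - (1 + (k : ℝ))⁻¹) (digamma 1 - digamma x) := by
  refine ((summable_inv_add_nat_sub_inv_add_nat hx one_pos).hasSum_iff_tendsto_nat).2 ?_
  have hpartial : ∀ N : ℕ, ∑ k ∈ Finset.range N, ((x + k)⁻¹ - (1 + (k : ℝ))⁻¹) =
      digamma 1 - digamma x + (digamma ((N + 1 : ℝ) + (x - 1)) - digamma (N + 1)) := fun N => by
    rw [Finset.sum_sub_distrib, ← sub_eq_iff_eq_add'.2 (digamma_add_nat hx N),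
      ← sub_eq_iff_eq_add'.2 (digamma_add_nat one_pos N)]
    ring_nf
  have h := (tendsto_digamma_add_sub_digamma (x - 1)).comp
    (tendsto_atTop_add_const_right _ 1 tendsto_natCast_atTop_atTop)
  simpa [hpartial] using (tendsto_const_nhds (x := digamma 1 - digamma x)).add h

lemma hasDerivAt_digamma {x : ℝ} (hx : 0 < x) : HasDerivAt digamma (hurwitzSum 2 x) x := by
  have h := (hasDerivAt_tsum_inv_add_nat_pow_sub one_ne_zero (fun k => (1 + k)⁻¹) hx
    (by simpa using (hasSum_digamma hx).summable)).const_sub (digamma 1)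
  norm_num at h
  refine h.congr_of_eventuallyEq ?_
  filter_upwards [Ioi_mem_nhds hx] with t ht
  rw [(hasSum_digamma ht).tsum_eq]
  ring

lemma polygamma_succ_eqOn (j : ℕ) : EqOn (polygamma (j + 1))
    (fun x => (-1) ^ j * (j + 1)! * hurwitzSum (j + 2) x) (Ioi 0) := by
  induction j with
  | zero =>
    intro x hx
    simp [polygamma, (hasDerivAt_digamma hx).deriv]
  | succ j ih =>
    intro x hx
    rw [polygamma, iteratedDeriv_succ, ← polygamma, ih.deriv isOpen_Ioi hx,
      ((hasDerivAt_hurwitzSum (by omega) hx).const_mul _).deriv, Nat.factorial_succ (j + 1)]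
    push_cast
    ring

lemma abs_polygamma {j : ℕ} (hj : j ≠ 0) {x : ℝ} (hx : 0 < x) :
    |polygamma j x| = j ! * hurwitzSum (j + 1) x := by
  obtain ⟨j, rfl⟩ := Nat.exists_eq_succ_of_ne_zero hj
  rw [polygamma_succ_eqOn j hx, abs_mul, abs_mul, abs_pow, abs_neg, abs_one, one_pow, one_mul,
    abs_of_pos (hurwitzSum_pos (by omega) hx), Nat.abs_cast]

lemma hasDerivAt_abs_polygamma {j : ℕ} (hj : j ≠ 0) {x : ℝ} (hx : 0 < x) :
    HasDerivAt (fun x => |polygamma j x|) (-|polygamma (j + 1) x|) x := by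
  have h := (hasDerivAt_hurwitzSum (m := j + 1) (by omega) hx).const_mul (j ! : ℝ)
  rw [abs_polygamma (by omega) hx, Nat.factorial_succ]
  refine (h.congr_of_eventuallyEq ?_).congr_deriv (by push_cast; ring)
  filter_upwards [Ioi_mem_nhds hx] with t ht
  exact abs_polygamma hj ht

lemma strictAntiOn_mul_abs_polygamma {j : ℕ} (hj : 2 ≤ j) :
    StrictAntiOn (fun u => u * |polygamma j u|) (Ioi 0) := by
  intro a ha b hb hab
  have h := strictAntiOn_mul_hurwitzSum (m := j + 1) (by omega) ha hb hab
  have hfac : (0 : ℝ) < j ! := by positivity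
  simp only [abs_polygamma (by omega : j ≠ 0) ha, abs_polygamma (by omega : j ≠ 0) hb]
  nlinarith

lemma strictAntiOn_add_sub_comp_mul {h g : ℝ → ℝ}
    (hh : ∀ x ∈ Ioi (0 : ℝ), HasDerivAt h (-g x) x)
    (hg : StrictAntiOn (fun u => u * g u) (Ioi 0)) (c : ℝ) {y : ℝ} (hy : 1 < y) :
    StrictAntiOn (fun x => h x + c - h (x * y)) (Ioi 0) := by
  have hy₀ : 0 < y := by linarith
  have hderiv : ∀ x ∈ Ioi (0 : ℝ), HasDerivAt (fun x => h x + c - h (x * y))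
      (-g x - -g (x * y) * y) x := fun x hx =>
    ((hh x hx).add_const c).sub
      ((hh (x * y) (mul_pos hx hy₀)).comp x (hasDerivAt_mul_const y))
  refine strictAntiOn_of_deriv_neg (convex_Ioi 0)
    (fun x hx => (hderiv x hx).continuousAt.continuousWithinAt) fun x hx => ?_
  rw [interior_Ioi] at hx
  have hx' : 0 < x := hx
  rw [(hderiv x hx).deriv]
  have h := hg hx (mul_pos hx' hy₀) (lt_mul_of_one_lt_right hx' hy)
  simp only at h
  nlinarith

lemma strictMonoOn_add_sub_comp_mul {h g : ℝ → ℝ}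
    (hh : ∀ x ∈ Ioi (0 : ℝ), HasDerivAt h (-g x) x)
    (hg : StrictAntiOn (fun u => u * g u) (Ioi 0)) (c : ℝ) {y : ℝ} (hy₀ : 0 < y) (hy : y < 1) :
    StrictMonoOn (fun x => h x + c - h (x * y)) (Ioi 0) := by
  intro a ha b hb hab
  have ha' : (0 : ℝ) < a := ha
  have hb' : (0 : ℝ) < b := hb
  have h := strictAntiOn_add_sub_comp_mul hh hg c (one_lt_inv_iff₀.2 ⟨hy₀, hy⟩)
    (mul_pos ha' hy₀) (mul_pos hb' hy₀) (mul_lt_mul_of_pos_right hab hy₀)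
  simp only [mul_inv_cancel_right₀ hy₀.ne'] at h
  linarith

theorem stmt7 (i : ℕ) (hi : 0 < i) (y : ℝ) (hy : 0 < y) :
    (1 < y → StrictAntiOn
      (fun x : ℝ => |polygamma i x| + |polygamma i y| - |polygamma i (x * y)|) (Set.Ioi 0)) ∧
    (y < 1 → StrictMonoOn
      (fun x : ℝ => |polygamma i x| + |polygamma i y| - |polygamma i (x * y)|) (Set.Ioi 0)) := by
  have hderiv : ∀ x ∈ Ioi (0 : ℝ), HasDerivAt (fun x => |polygamma i x|)
      (-|polygamma (i + 1) x|) x := fun x hx => hasDerivAt_abs_polygamma hi.ne' hx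
  have hanti := strictAntiOn_mul_abs_polygamma (j := i + 1) (by omega)
  exact ⟨fun hy₁ => strictAntiOn_add_sub_comp_mul hderiv hanti _ hy₁,
    fun hy₁ => strictMonoOn_add_sub_comp_mul hderiv hanti _ hy hy₁⟩
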